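/- arXiv:1312.3184 — 4 statements merged into one kernel-verified Lean document; each statement's English description precedes it below -/
import Mathlib

section
/- For every contract C and contract literal c, the language of the literal derivative δ_c(C) is contained in the intersection over all properties p ∈ L(c) of the languages L(δ_p(C)). -/
/-- Contracts: extended regular expressions with intersection.
Literals are modeled as sets of properties. -/
inductive Contract (A : Type*) where
  | emptyset : Contract A
  | eps : Contract A
  | lit : Set A → Contract A
  | star : Contract A → Contract A
  | union : Contract A → Contract A → Contract A
  | inter : Contract A → Contract A → Contract A
  | concat : Contract A → Contract A → Contract A

namespace Contract

variable {A : Type*}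

/-- The language of a contract, a set of access paths (words over `A`). -/
def lang : Contract A → Set (List A)
  | emptyset => ∅
  | eps => {[]}
  | lit s => {w | ∃ p ∈ s, w = [p]}
  | star c => {w | ∃ l : List (List A), (∀ x ∈ l, x ∈ lang c) ∧ w = l.flatten}
  | union c c' => lang c ∪ lang c'
  | inter c c' => lang c ∩ lang c'
  | concat c c' => {w | ∃ u ∈ lang c, ∃ v ∈ lang c', w = u ++ v}

/-- Syntactic nullability predicate ν. -/
def nullable : Contract A → Bool
  | emptyset => false
  | eps => true
  | lit _ => false
  | star _ => true
  | union c c' => nullable c || nullable c'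
  | inter c c' => nullable c && nullable c'
  | concat c c' => nullable c && nullable c'

open Classical in
/-- Brzozowski derivative of a contract by a property. -/
noncomputable def deriv (p : A) : Contract A → Contract A
  | emptyset => emptyset
  | eps => emptyset
  | lit s => if p ∈ s then eps else emptyset
  | star c => concat (deriv p c) (star c)
  | union c c' => union (deriv p c) (deriv p c')
  | inter c c' => inter (deriv p c) (deriv p c')
  | concat c c' =>
      if nullable c then union (concat (deriv p c) c') (deriv p c')
      else concat (deriv p c) c'

/-- Iterated derivative by an access path. -/
noncomputable def derivWord : List A → Contract A → Contract A
  | [], C => C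
  | p :: P, C => derivWord P (deriv p C)

open Classical in
/-- Literal derivative of a contract by a literal (a set of properties). -/
noncomputable def lderiv (c : Set A) : Contract A → Contract A
  | emptyset => emptyset
  | eps => emptyset
  | lit s => if c ⊆ s then eps else emptyset
  | star C => concat (lderiv c C) (star C)
  | union C C' => union (lderiv c C) (lderiv c C')
  | inter C C' => inter (lderiv c C) (lderiv c C')
  | concat C C' =>
      if nullable C then union (concat (lderiv c C) C') (lderiv c C')
      else concat (lderiv c C) C'

/-- First literals of a contract. -/
def firstLits : Contract A → Set (Set A)
  | emptyset => ∅
  | eps => ∅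
  | lit s => {s}
  | star c => firstLits c
  | union c c' => firstLits c ∪ firstLits c'
  | inter c c' => {s | ∃ a ∈ firstLits c, ∃ b ∈ firstLits c', s = a ∩ b}
  | concat c c' => if nullable c then firstLits c ∪ firstLits c' else firstLits c

/-- First properties of non-empty paths in the language of a contract. -/
def nextP (C : Contract A) : Set A := {p | ∃ P, p :: P ∈ lang C}

end Contract

/-- Left quotient of a language by a word. -/
def leftQuotient {A : Type*} (P : List A) (L : Set (List A)) : Set (List A) :=
  {w | P ++ w ∈ L}

namespace Contract

variable {A : Type*}

theorem lang_concat_subset_lang_concat_of_subset_left {C D : Contract A} (E : Contract A)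
    (h : lang C ⊆ lang D) : lang (concat C E) ⊆ lang (concat D E) := by
  rintro w ⟨u, hu, v, hv, rfl⟩
  exact ⟨u, h hu, v, hv, rfl⟩

theorem lang_lderiv_subset_lang_deriv {c : Set A} {p : A} (hp : p ∈ c) :
    ∀ C : Contract A, lang (lderiv c C) ⊆ lang (deriv p C)
  | emptyset | eps => by simp only [lderiv, deriv, subset_refl]
  | lit s => by
    by_cases hcs : c ⊆ s
    · simp only [lderiv, deriv, if_pos hcs, if_pos (hcs hp), subset_refl]
    · simp only [lderiv, if_neg hcs, lang, Set.empty_subset]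
  | star C => lang_concat_subset_lang_concat_of_subset_left _ (lang_lderiv_subset_lang_deriv hp C)
  | union C D => Set.union_subset_union (lang_lderiv_subset_lang_deriv hp C)
      (lang_lderiv_subset_lang_deriv hp D)
  | inter C D => Set.inter_subset_inter (lang_lderiv_subset_lang_deriv hp C)
      (lang_lderiv_subset_lang_deriv hp D)
  | concat C D => by
    have hC := lang_concat_subset_lang_concat_of_subset_left D (lang_lderiv_subset_lang_deriv hp C)
    by_cases hν : nullable C
    · simp only [lderiv, deriv, if_pos hν]
      exact Set.union_subset_union hC (lang_lderiv_subset_lang_deriv hp D)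
    · simp only [lderiv, deriv, if_neg hν]
      exact hC

end Contract

/-- The language of the literal derivative is contained in the intersection of the
property derivatives over the literal. -/
theorem lang_lderiv_subset {A : Type*} (C : Contract A) (c : Set A) :
    (Contract.lang (Contract.lderiv c C) : Set (List A)) ⊆
      ⋂ p ∈ c, (Contract.lang (Contract.deriv p C) : Set (List A)) :=
  Set.subset_iInter₂ fun _ hp => Contract.lang_lderiv_subset_lang_deriv hp C
end

section
/- For every contract C and every literal c ∈ first(C), assuming that for all p, p' ∈ L(c) the derivatives δ_p(C) and δ_{p'}(C) coincide, the language of the literal derivative δ_c(C) equals the intersection over all p ∈ L(c) of L(δ_p(C)). -/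
/-!
If all derivatives of `C` by properties in `c` coincide, then `lderiv c C` is syntactically the
derivative of `C` by any `p₀ ∈ c`. The only case needing thought is a literal `s` with `c ⊄ s`:
some `p ∈ c \ s` has `deriv p (lit s) = ∅`, and the hypothesis transfers this to `p₀`. In every
other case the hypothesis passes to the subcontracts by injectivity of the constructors.
-/

namespace Contract

variable {A : Type*}

theorem lderiv_eq_deriv {c : Set A} {p₀ : A} (hp₀ : p₀ ∈ c) {C : Contract A}
    (h : ∀ p ∈ c, deriv p C = deriv p₀ C) : lderiv c C = deriv p₀ C := by
  induction C with
  | emptyset | eps => rfl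
  | lit s =>
    by_cases hcs : c ⊆ s
    · simp [lderiv, deriv, hcs, hcs hp₀]
    · obtain ⟨p, hpc, hps⟩ := Set.not_subset.mp hcs
      rw [← h p hpc]
      simp [lderiv, deriv, hcs, hps]
  | star C ih =>
    simp only [deriv, concat.injEq] at h
    simp only [lderiv, deriv, ih fun p hp => (h p hp).1]
  | union C C' ih ih' =>
    simp only [deriv, union.injEq] at h
    simp only [lderiv, deriv, ih fun p hp => (h p hp).1, ih' fun p hp => (h p hp).2]
  | inter C C' ih ih' =>
    simp only [deriv, inter.injEq] at h
    simp only [lderiv, deriv, ih fun p hp => (h p hp).1, ih' fun p hp => (h p hp).2]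
  | concat C C' ih ih' =>
    cases hn : nullable C
    · simp only [deriv, hn, Bool.false_eq_true, if_false, concat.injEq] at h
      simp only [lderiv, deriv, hn, Bool.false_eq_true, if_false, ih fun p hp => (h p hp).1]
    · simp only [deriv, hn, if_true, union.injEq, concat.injEq] at h
      simp only [lderiv, deriv, hn, if_true, ih fun p hp => (h p hp).1.1,
        ih' fun p hp => (h p hp).2]

end Contract

theorem lang_lderiv_eq_general {A : Type*} (C : Contract A) (c : Set A)
    (hne : c.Nonempty)
    (hcoincide : ∀ p ∈ c, ∀ p2 ∈ c, Contract.deriv p C = Contract.deriv p2 C) :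
    (Contract.lang (Contract.lderiv c C) : Set (List A)) =
      ⋂ p ∈ c, (Contract.lang (Contract.deriv p C) : Set (List A)) := by
  obtain ⟨p₀, hp₀⟩ := hne
  have hC : ∀ p ∈ c, Contract.deriv p C = Contract.deriv p₀ C :=
    fun p hp => hcoincide p hp p₀ hp₀
  calc Contract.lang (Contract.lderiv c C) = Contract.lang (Contract.deriv p₀ C) := by
        rw [Contract.lderiv_eq_deriv hp₀ hC]
    _ = ⋂ p ∈ c, Contract.lang (Contract.deriv p₀ C) := (Set.biInter_const ⟨p₀, hp₀⟩ _).symm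
    _ = ⋂ p ∈ c, Contract.lang (Contract.deriv p C) :=
        Set.iInter₂_congr fun p hp => by rw [hC p hp]

/-- For a first literal whose property derivatives all coincide, the literal
derivative captures exactly the intersection of the property derivatives. -/
theorem lang_lderiv_eq {A : Type*} (C : Contract A) (c : Set A)
    (hc : c ∈ Contract.firstLits C) (hne : c.Nonempty)
    (hcoincide : ∀ p ∈ c, ∀ p2 ∈ c, Contract.deriv p C = Contract.deriv p2 C) :
    (Contract.lang (Contract.lderiv c C) : Set (List A)) =
      ⋂ p ∈ c, (Contract.lang (Contract.deriv p C) : Set (List A)) :=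
  lang_lderiv_eq_general C c hne hcoincide
end

section
/- For every property p and every path P, if P ∈ L(δ_p(C)) then there exists a literal c ∈ first(C) with p ∈ L(c) such that P ∈ L(δ_c(C)) (path preservation of the literal derivative). -/
namespace Contract

variable {A : Type*}

theorem mem_lang_deriv_lit {p : A} {s : Set A} {w : List A} :
    w ∈ lang (deriv p (lit s)) ↔ p ∈ s ∧ w = [] := by
  by_cases hp : p ∈ s <;> simp [deriv, lang, hp]

theorem lang_lderiv_lit_self (s : Set A) : lang (lderiv s (lit s)) = {[]} := by
  simp [lderiv, lang]

theorem mem_lang_deriv_concat {p : A} {C C' : Contract A} {w : List A} :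
    w ∈ lang (deriv p (concat C C')) ↔
      (∃ u ∈ lang (deriv p C), ∃ v ∈ lang C', w = u ++ v) ∨
        (nullable C ∧ w ∈ lang (deriv p C')) := by
  by_cases hn : nullable C <;> simp [deriv, lang, hn]

theorem mem_lang_lderiv_concat {c : Set A} {C C' : Contract A} {w : List A} :
    w ∈ lang (lderiv c (concat C C')) ↔
      (∃ u ∈ lang (lderiv c C), ∃ v ∈ lang C', w = u ++ v) ∨
        (nullable C ∧ w ∈ lang (lderiv c C')) := by
  by_cases hn : nullable C <;> simp [lderiv, lang, hn]

theorem mem_firstLits_concat {s : Set A} {C C' : Contract A} :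
    s ∈ firstLits (concat C C') ↔
      s ∈ firstLits C ∨ (nullable C ∧ s ∈ firstLits C') := by
  by_cases hn : nullable C <;> simp [firstLits, hn]

theorem lang_lderiv_antitone (C : Contract A) :
    Antitone fun c : Set A => lang (lderiv c C) := by
  intro c₀ c₁ hsub
  induction C with
  | emptyset | eps => simp [lderiv]
  | lit s =>
    by_cases h : c₁ ⊆ s
    · simp [lderiv, h, hsub.trans h]
    · simp [lderiv, lang, h]
  | star C ih =>
    rintro w ⟨u, hu, v, hv, rfl⟩
    exact ⟨u, ih hu, v, hv, rfl⟩
  | union C C' ih ih' => exact Set.union_subset_union ih ih'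
  | inter C C' ih ih' => exact Set.inter_subset_inter ih ih'
  | concat C C' ih ih' =>
    intro w hw
    rcases mem_lang_lderiv_concat.1 hw with ⟨u, hu, v, hv, rfl⟩ | ⟨hn, hw'⟩
    · exact mem_lang_lderiv_concat.2 (.inl ⟨u, ih hu, v, hv, rfl⟩)
    · exact mem_lang_lderiv_concat.2 (.inr ⟨hn, ih' hw'⟩)

def PreservesPaths (p : A) (C : Contract A) : Prop :=
  ∀ P ∈ lang (deriv p C), ∃ c ∈ firstLits C, p ∈ c ∧ P ∈ lang (lderiv c C)

section PreservesPaths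

variable {p : A}

theorem preservesPaths_lit (s : Set A) : PreservesPaths p (lit s) := by
  intro P hP
  obtain ⟨hp, rfl⟩ := mem_lang_deriv_lit.1 hP
  exact ⟨s, rfl, hp, by simp [lang_lderiv_lit_self]⟩

theorem PreservesPaths.star {C : Contract A} (hC : PreservesPaths p C) :
    PreservesPaths p (star C) := by
  rintro _ ⟨u, hu, v, hv, rfl⟩
  obtain ⟨a, ha, hpa, hua⟩ := hC u hu
  exact ⟨a, ha, hpa, u, hua, v, hv, rfl⟩

theorem PreservesPaths.union {C C' : Contract A} (hC : PreservesPaths p C)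
    (hC' : PreservesPaths p C') : PreservesPaths p (union C C') := by
  rintro P (hP | hP)
  · obtain ⟨a, ha, hpa, hPa⟩ := hC P hP
    exact ⟨a, .inl ha, hpa, .inl hPa⟩
  · obtain ⟨a, ha, hpa, hPa⟩ := hC' P hP
    exact ⟨a, .inr ha, hpa, .inr hPa⟩

theorem PreservesPaths.inter {C C' : Contract A} (hC : PreservesPaths p C)
    (hC' : PreservesPaths p C') : PreservesPaths p (inter C C') := by
  rintro P ⟨hP, hP'⟩
  obtain ⟨a, ha, hpa, hPa⟩ := hC P hP
  obtain ⟨b, hb, hpb, hPb⟩ := hC' P hP'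
  exact ⟨a ∩ b, ⟨a, ha, b, hb, rfl⟩, ⟨hpa, hpb⟩,
    lang_lderiv_antitone C Set.inter_subset_left hPa,
    lang_lderiv_antitone C' Set.inter_subset_right hPb⟩

theorem PreservesPaths.concat {C C' : Contract A} (hC : PreservesPaths p C)
    (hC' : PreservesPaths p C') : PreservesPaths p (concat C C') := by
  intro P hP
  rcases mem_lang_deriv_concat.1 hP with ⟨u, hu, v, hv, rfl⟩ | ⟨hn, hP'⟩
  · obtain ⟨a, ha, hpa, hua⟩ := hC u hu
    exact ⟨a, mem_firstLits_concat.2 (.inl ha), hpa,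
      mem_lang_lderiv_concat.2 (.inl ⟨u, hua, v, hv, rfl⟩)⟩
  · obtain ⟨a, ha, hpa, hPa⟩ := hC' P hP'
    exact ⟨a, mem_firstLits_concat.2 (.inr ⟨hn, ha⟩), hpa,
      mem_lang_lderiv_concat.2 (.inr ⟨hn, hPa⟩)⟩

theorem preservesPaths (C : Contract A) : PreservesPaths p C := by
  induction C with
  | emptyset | eps => simp [PreservesPaths, deriv, lang]
  | lit s => exact preservesPaths_lit s
  | star C ih => exact ih.star
  | union C C' ih ih' => exact ih.union ih'
  | inter C C' ih ih' => exact ih.inter ih'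
  | concat C C' ih ih' => exact ih.concat ih'

end PreservesPaths

end Contract

/-- Path preservation of the literal derivative. -/
theorem path_preservation {A : Type*} (C : Contract A) (p : A) (P : List A)
    (h : P ∈ Contract.lang (Contract.deriv p C)) :
    ∃ c ∈ Contract.firstLits C, p ∈ c ∧ P ∈ Contract.lang (Contract.lderiv c C) :=
  Contract.preservesPaths C P h
end

section
/- For contracts C and C', if (ν(C) implies ν(C')) and for every literal c ∈ first(C) the literal derivatives satisfy L(δ_c(C)) ⊆ L(δ_c(C')), then L(C) ⊆ L(C'). -/
/-!
A word of `L(C)` is either empty, and then `ν(C)` carries it over to `C'`, or of the form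
`p :: P`. In the second case some first literal `c` of `C` contains `p` and has
`P ∈ L(δ_c(C))`; the hypothesis moves `P` into `L(δ_c(C'))`, and since `p ∈ c` the literal
derivative is sound for `p`, so `p :: P ∈ L(C')`. For an intersection the first literals are
pairwise intersections `c₁ ∩ c₂`, which is why `δ_c` must be antitone in the literal `c`.
-/

namespace Contract

variable {A : Type*}

theorem nullable_iff_nil_mem_lang (C : Contract A) : nullable C = true ↔ [] ∈ lang C := by
  induction C with
  | emptyset | eps | lit s | union c c' ih ih' | inter c c' ih ih' =>
    simp [nullable, lang, *]
  | star c => simpa [nullable, lang] using ⟨[], by simp⟩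
  | concat c c' ih ih' =>
    simp only [nullable, lang, Bool.and_eq_true, ih, ih']
    constructor
    · rintro ⟨h, h'⟩
      exact ⟨[], h, [], h', rfl⟩
    · rintro ⟨u, hu, v, hv, huv⟩
      obtain ⟨rfl, rfl⟩ := List.append_eq_nil_iff.mp huv.symm
      exact ⟨hu, hv⟩

theorem cons_mem_lang_of_mem_lang_lderiv {c : Set A} {p : A} (hp : p ∈ c) (X : Contract A)
    {P : List A} (hP : P ∈ lang (lderiv c X)) : p :: P ∈ lang X := by
  induction X generalizing P with
  | emptyset | eps => simp [lderiv, lang] at hP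
  | lit s =>
    by_cases hcs : c ⊆ s
    · simp only [lderiv, if_pos hcs, lang, Set.mem_singleton_iff] at hP
      exact ⟨p, hcs hp, by rw [hP]⟩
    · simp [lderiv, if_neg hcs, lang] at hP
  | star x ih =>
    obtain ⟨u, hu, _, ⟨l, hl, rfl⟩, rfl⟩ := hP
    refine ⟨(p :: u) :: l, ?_, rfl⟩
    rintro y (_ | ⟨_, hy⟩)
    exacts [ih hu, hl y hy]
  | union x x' ih ih' => exact hP.imp ih ih'
  | inter x x' ih ih' => exact ⟨ih hP.1, ih' hP.2⟩
  | concat x x' ih ih' =>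
    by_cases hx : nullable x = true
    · simp only [lderiv, if_pos hx] at hP
      rcases hP with ⟨u, hu, v, hv, rfl⟩ | hP
      · exact ⟨p :: u, ih hu, v, hv, rfl⟩
      · exact ⟨[], (nullable_iff_nil_mem_lang x).mp hx, p :: P, ih' hP, rfl⟩
    · simp only [lderiv, if_neg hx] at hP
      obtain ⟨u, hu, v, hv, rfl⟩ := hP
      exact ⟨p :: u, ih hu, v, hv, rfl⟩

theorem lang_lderiv_anti {c c' : Set A} (hc : c ⊆ c') (X : Contract A) :
    lang (lderiv c' X) ⊆ lang (lderiv c X) := by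
  induction X with
  | emptyset | eps => exact subset_rfl
  | lit s =>
    by_cases hs : c' ⊆ s
    · simp only [lderiv, if_pos hs, if_pos (hc.trans hs), subset_rfl]
    · simp [lderiv, if_neg hs, lang]
  | star x ih =>
    rintro w ⟨u, hu, v, hv, rfl⟩
    exact ⟨u, ih hu, v, hv, rfl⟩
  | union x x' ih ih' => exact Set.union_subset_union ih ih'
  | inter x x' ih ih' => exact Set.inter_subset_inter ih ih'
  | concat x x' ih ih' =>
    by_cases hx : nullable x = true
    · simp only [lderiv, if_pos hx]
      rintro w (⟨u, hu, v, hv, rfl⟩ | hw)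
      exacts [Or.inl ⟨u, ih hu, v, hv, rfl⟩, Or.inr (ih' hw)]
    · simp only [lderiv, if_neg hx]
      rintro w ⟨u, hu, v, hv, rfl⟩
      exact ⟨u, ih hu, v, hv, rfl⟩

theorem exists_mem_firstLits_of_cons_mem_lang {p : A} (X : Contract A) {P : List A}
    (h : p :: P ∈ lang X) : ∃ c ∈ firstLits X, p ∈ c ∧ P ∈ lang (lderiv c X) := by
  induction X generalizing P with
  | emptyset | eps => simp [lang] at h
  | lit s =>
    obtain ⟨q, hq, hw⟩ := h
    obtain ⟨rfl, rfl⟩ := List.cons_eq_cons.mp hw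
    exact ⟨s, rfl, hq, by simp only [lderiv, if_pos subset_rfl]; rfl⟩
  | star x ih =>
    obtain ⟨l, hl, hflat⟩ := h
    obtain ⟨as, bs, cs, rfl, -, rfl⟩ := List.flatten_eq_cons_iff.mp hflat.symm
    obtain ⟨c, hc, hpc, hbs⟩ := ih (P := bs) (hl _ (by simp))
    exact ⟨c, hc, hpc, bs, hbs, _, ⟨cs, fun y hy => hl y (by simp [hy]), rfl⟩, rfl⟩
  | union x x' ih ih' =>
    rcases h with h | h
    · obtain ⟨c, hc, hpc, hP⟩ := ih h
      exact ⟨c, Or.inl hc, hpc, Or.inl hP⟩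
    · obtain ⟨c, hc, hpc, hP⟩ := ih' h
      exact ⟨c, Or.inr hc, hpc, Or.inr hP⟩
  | inter x x' ih ih' =>
    obtain ⟨c, hc, hpc, hP⟩ := ih h.1
    obtain ⟨c', hc', hpc', hP'⟩ := ih' h.2
    exact ⟨c ∩ c', ⟨c, hc, c', hc', rfl⟩, ⟨hpc, hpc'⟩,
      lang_lderiv_anti Set.inter_subset_left x hP, lang_lderiv_anti Set.inter_subset_right x' hP'⟩
  | concat x x' ih ih' =>
    obtain ⟨u, hu, v, hv, huv⟩ := h
    cases u with
    | nil =>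
      subst huv
      have hx := (nullable_iff_nil_mem_lang x).mpr hu
      obtain ⟨c, hc, hpc, hP⟩ := ih' hv
      refine ⟨c, ?_, hpc, ?_⟩
      · rw [firstLits, if_pos hx]
        exact Or.inr hc
      · rw [lderiv, if_pos hx]
        exact Or.inr hP
    | cons q u =>
      obtain ⟨rfl, rfl⟩ := List.cons_eq_cons.mp huv
      obtain ⟨c, hc, hpc, hP⟩ := ih hu
      refine ⟨c, ?_, hpc, ?_⟩
      · unfold firstLits
        split
        exacts [Or.inl hc, hc]
      · unfold lderiv
        split
        exacts [Or.inl ⟨u, hP, v, hv, rfl⟩, ⟨u, hP, v, hv, rfl⟩]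

end Contract

/-- Soundness of the syntactic containment procedure via literal derivatives. -/
theorem containment_of_lderiv {A : Type*} (C C2 : Contract A)
    (hnull : Contract.nullable C = true → Contract.nullable C2 = true)
    (hderiv : ∀ c ∈ Contract.firstLits C,
      (Contract.lang (Contract.lderiv c C) : Set (List A)) ⊆
        (Contract.lang (Contract.lderiv c C2) : Set (List A))) :
    (Contract.lang C : Set (List A)) ⊆ (Contract.lang C2 : Set (List A)) := by
  rintro (_ | ⟨p, P⟩) hw
  · rw [← Contract.nullable_iff_nil_mem_lang] at hw ⊢
    exact hnull hw
  · obtain ⟨c, hc, hpc, hP⟩ := Contract.exists_mem_firstLits_of_cons_mem_lang C hw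
    exact Contract.cons_mem_lang_of_mem_lang_lderiv hpc C2 (hderiv c hc hP)
end
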